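/- arXiv:funct-an/9512001 — 2 statements merged into one kernel-verified Lean document; each statement's English description precedes it below -/
import Mathlib

section
/- Let N ≥ 2, κ > 0, α ∈ ℝ with α + Nκ ≠ 0. For j,ℓ ∈ {1,…,N} and x,y ≥ 0 define G_{jℓ}(x,y) := δ_{jℓ}·κ^{-1}·sinh(κ·min(x,y))·exp(−κ·max(x,y)) + (α+Nκ)^{-1}·exp(−κ(x+y)). Let f_1,…,f_N : (0,∞) → ℝ be continuous with compact support, and set w_j(x) := Σ_{ℓ=1}^N ∫₀^∞ G_{jℓ}(x,y) f_ℓ(y) dy for x ≥ 0. Then: (i) each w_j is continuously differentiable on [0,∞) and twice differentiable on (0,∞) with w_j''(x) = κ²·w_j(x) − f_j(x) for every x > 0; (ii) w_1(0) = w_2(0) = ⋯ = w_N(0); (iii) Σ_{j=1}^N w_j'(0) = α·w_1(0); (iv) each w_j belongs to L²((0,∞)). (This is the free-potential case of the paper's Lemma on the resolvent kernel of the δ-coupled Schrödinger operator H_α(0) on the star graph, at energy k² = −κ².) -/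
open MeasureTheory Set Real

/-- Resolvent kernel of the free δ-coupled Schrödinger operator `H_α(0)` on the
star graph of `N` half-lines at energy `−κ²`. -/
noncomputable def freeStarKernel (N : ℕ) (κ α : ℝ) (j ℓ : Fin N) (x y : ℝ) : ℝ :=
  (if j = ℓ then 1 else 0) *
      (κ⁻¹ * Real.sinh (κ * min x y) * Real.exp (-(κ * max x y)))
    + (α + N * κ)⁻¹ * Real.exp (-(κ * (x + y)))

/-!
The kernel is the Dirichlet Green function `κ⁻¹ sinh (κ min x y) e^{-κ max x y}` of `-d²/dx² + κ²`
on the half-line, placed on the diagonal, plus the rank-one term `(α + Nκ)⁻¹ e^{-κx} e^{-κy}`.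
Hence `w_j = u_j + C e^{-κx}` (`halfLineSolution`) with one constant
`C = (α + Nκ)⁻¹ Σ_ℓ ∫₀^∞ e^{-κy} f_ℓ` for all edges. Splitting the Green integral at `y = x` gives
the variation-of-constants formula (`dirichletResolvent`)
`u_j x = κ⁻¹ (e^{-κx} ∫₀^x sinh (κy) f_j + sinh (κx) ∫ₓ^∞ e^{-κy} f_j)`, so the fundamental
theorem of calculus yields `w'' = κ² w - f`. Since `u_j 0 = 0` and `u_j' 0 = ∫₀^∞ e^{-κy} f_j`,
all `w_j 0` equal `C` and `Σ_j w_j' 0 = (1 - Nκ (α + Nκ)⁻¹) Σ_ℓ ∫₀^∞ e^{-κy} f_ℓ = α C`.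
Beyond the support of `f_j`, `w_j` is a multiple of `e^{-κx}`, hence square integrable.
-/

theorem HasCompactSupport.exists_forall_le_eq_zero {α : Type*} [Zero α] {f : ℝ → α}
    (hf : HasCompactSupport f) : ∃ T, ∀ x, T ≤ x → f x = 0 := by
  obtain ⟨B, hB⟩ := hf.isCompact.bddAbove
  exact ⟨B + 1, fun x hx => image_eq_zero_of_notMem_tsupport fun h => by linarith [hB h]⟩

theorem Continuous.integrable_mul_of_hasCompactSupport {g f : ℝ → ℝ} (hg : Continuous g)
    (hf : Continuous f) (hfs : HasCompactSupport f) : Integrable fun y => g y * f y :=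
  (hg.mul hf).integrable_of_hasCompactSupport hfs.mul_left

theorem memLp_two_restrict_Ioi_of_eq_mul_exp {κ : ℝ} (hκ : 0 < κ) {g : ℝ → ℝ}
    (hg : Continuous g) {T B : ℝ} (hT : ∀ x, T ≤ x → g x = B * exp (-(κ * x))) (a : ℝ) :
    MemLp g 2 (volume.restrict (Ioi a)) := by
  rw [memLp_two_iff_integrable_sq hg.aestronglyMeasurable]
  have hhead : IntegrableOn (fun x => g x ^ 2) (Icc a T) := (hg.pow 2).integrableOn_Icc
  have htail : IntegrableOn (fun x => g x ^ 2) (Ioi T) := by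
    have hexp : IntegrableOn (fun x => B ^ 2 * exp (-(2 * κ) * x)) (Ioi T) :=
      (exp_neg_integrableOn_Ioi T (by positivity)).const_mul _
    refine hexp.congr_fun (fun x hx => ?_) measurableSet_Ioi
    rw [hT x (le_of_lt hx), mul_pow, sq (exp _), ← exp_add]
    ring_nf
  exact (hhead.union htail).mono_set fun x hx => (le_or_gt x T).imp (fun h => ⟨le_of_lt hx, h⟩) id

theorem hasDerivAt_exp_neg_mul (κ x : ℝ) :
    HasDerivAt (fun t => exp (-(κ * t))) (-κ * exp (-(κ * x))) x := by
  simpa [mul_comm] using ((hasDerivAt_id' x).const_mul κ).neg.exp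

noncomputable def dirichletKernel (κ x y : ℝ) : ℝ :=
  κ⁻¹ * sinh (κ * min x y) * exp (-(κ * max x y))

theorem continuous_dirichletKernel (κ x : ℝ) : Continuous (dirichletKernel κ x) := by
  unfold dirichletKernel; fun_prop

noncomputable def sinhPrimitive (κ : ℝ) (f : ℝ → ℝ) (x : ℝ) : ℝ :=
  ∫ y in (0 : ℝ)..x, sinh (κ * y) * f y

noncomputable def expTail (κ : ℝ) (f : ℝ → ℝ) (x : ℝ) : ℝ :=
  ∫ y in Ioi x, exp (-(κ * y)) * f y

noncomputable def dirichletResolvent (κ : ℝ) (f : ℝ → ℝ) (x : ℝ) : ℝ :=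
  κ⁻¹ * (exp (-(κ * x)) * sinhPrimitive κ f x + sinh (κ * x) * expTail κ f x)

noncomputable def dirichletResolventDeriv (κ : ℝ) (f : ℝ → ℝ) (x : ℝ) : ℝ :=
  -(exp (-(κ * x)) * sinhPrimitive κ f x) + cosh (κ * x) * expTail κ f x

noncomputable def halfLineSolution (κ C : ℝ) (f : ℝ → ℝ) (x : ℝ) : ℝ :=
  dirichletResolvent κ f x + C * exp (-(κ * x))

noncomputable def halfLineSolutionDeriv (κ C : ℝ) (f : ℝ → ℝ) (x : ℝ) : ℝ :=
  dirichletResolventDeriv κ f x - κ * (C * exp (-(κ * x)))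

section HalfLine

variable {κ : ℝ} {f : ℝ → ℝ}

theorem hasDerivAt_sinhPrimitive (hf : Continuous f) (x : ℝ) :
    HasDerivAt (sinhPrimitive κ f) (sinh (κ * x) * f x) x := by
  have hc : Continuous fun y => sinh (κ * y) * f y := by fun_prop
  exact intervalIntegral.integral_hasDerivAt_right (hc.intervalIntegrable _ _)
    hc.aestronglyMeasurable.stronglyMeasurableAtFilter hc.continuousAt

theorem expTail_eq_sub (hf : Continuous f) (hfs : HasCompactSupport f) (x : ℝ) :
    expTail κ f x = expTail κ f 0 - ∫ y in (0 : ℝ)..x, exp (-(κ * y)) * f y := by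
  have hi : Integrable fun y => exp (-(κ * y)) * f y :=
    Continuous.integrable_mul_of_hasCompactSupport (by fun_prop) hf hfs
  rw [expTail, expTail, ← intervalIntegral.integral_Ioi_sub_Ioi' hi.integrableOn hi.integrableOn,
    sub_sub_cancel]

theorem hasDerivAt_expTail (hf : Continuous f) (hfs : HasCompactSupport f) (x : ℝ) :
    HasDerivAt (expTail κ f) (-(exp (-(κ * x)) * f x)) x := by
  have hc : Continuous fun y => exp (-(κ * y)) * f y := by fun_prop
  rw [funext (expTail_eq_sub hf hfs)]
  exact (intervalIntegral.integral_hasDerivAt_right (hc.intervalIntegrable _ _)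
    hc.aestronglyMeasurable.stronglyMeasurableAtFilter hc.continuousAt).const_sub _

theorem hasDerivAt_dirichletResolvent (hκ : κ ≠ 0) (hf : Continuous f)
    (hfs : HasCompactSupport f) (x : ℝ) :
    HasDerivAt (dirichletResolvent κ f) (dirichletResolventDeriv κ f x) x := by
  have hlin : HasDerivAt (fun t => κ * t) κ x := by simpa using (hasDerivAt_id' x).const_mul κ
  have h := (((hasDerivAt_exp_neg_mul κ x).mul (hasDerivAt_sinhPrimitive (κ := κ) hf x)).add
    (hlin.sinh.mul (hasDerivAt_expTail (κ := κ) hf hfs x))).const_mul κ⁻¹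
  refine h.congr_deriv ?_
  rw [dirichletResolventDeriv]
  field_simp
  ring

theorem hasDerivAt_dirichletResolventDeriv (hf : Continuous f)
    (hfs : HasCompactSupport f) (x : ℝ) :
    HasDerivAt (dirichletResolventDeriv κ f) (κ ^ 2 * dirichletResolvent κ f x - f x) x := by
  have hlin : HasDerivAt (fun t => κ * t) κ x := by simpa using (hasDerivAt_id' x).const_mul κ
  have h := ((hasDerivAt_exp_neg_mul κ x).mul (hasDerivAt_sinhPrimitive (κ := κ) hf x)).neg.add
    (hlin.cosh.mul (hasDerivAt_expTail (κ := κ) hf hfs x))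
  refine h.congr_deriv ?_
  have hexp : exp (-(κ * x)) * (sinh (κ * x) + cosh (κ * x)) = 1 := by
    rw [sinh_add_cosh, ← exp_add, neg_add_cancel, exp_zero]
  rw [dirichletResolvent]
  field_simp
  linear_combination (-f x) * hexp

theorem setIntegral_dirichletKernel_mul (hf : Continuous f) (hfs : HasCompactSupport f) {x : ℝ}
    (hx : 0 ≤ x) : ∫ y in Ioi 0, dirichletKernel κ x y * f y = dirichletResolvent κ f x := by
  have hi : Integrable fun y => dirichletKernel κ x y * f y :=
    (continuous_dirichletKernel κ x).integrable_mul_of_hasCompactSupport hf hfs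
  have hhead : ∫ y in (0 : ℝ)..x, dirichletKernel κ x y * f y
      = κ⁻¹ * exp (-(κ * x)) * sinhPrimitive κ f x := by
    rw [sinhPrimitive, ← intervalIntegral.integral_const_mul]
    refine intervalIntegral.integral_congr fun y hy => ?_
    rw [uIcc_of_le hx] at hy
    simp only [dirichletKernel, min_eq_right hy.2, max_eq_left hy.2]
    ring
  have htail : ∫ y in Ioi x, dirichletKernel κ x y * f y
      = κ⁻¹ * sinh (κ * x) * expTail κ f x := by
    rw [expTail, ← integral_const_mul]
    refine setIntegral_congr_fun measurableSet_Ioi fun y hy => ?_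
    simp only [dirichletKernel, min_eq_left (le_of_lt (mem_Ioi.1 hy)),
      max_eq_right (le_of_lt (mem_Ioi.1 hy))]
    ring
  rw [← intervalIntegral.integral_interval_add_Ioi hi.integrableOn hi.integrableOn, hhead, htail,
    dirichletResolvent]
  ring

theorem dirichletResolvent_eq_of_le (hf : Continuous f) {T x : ℝ}
    (hT : ∀ y, T ≤ y → f y = 0) (hx : T ≤ x) :
    dirichletResolvent κ f x = κ⁻¹ * sinhPrimitive κ f T * exp (-(κ * x)) := by
  have hc : Continuous fun y => sinh (κ * y) * f y := by fun_prop
  have hS : sinhPrimitive κ f x = sinhPrimitive κ f T := by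
    rw [sinhPrimitive, sinhPrimitive, ← intervalIntegral.integral_add_adjacent_intervals (b := T)
      (hc.intervalIntegrable _ _) (hc.intervalIntegrable _ _), add_eq_left]
    refine intervalIntegral.integral_zero_ae (Filter.Eventually.of_forall fun y hy => ?_)
    rw [uIoc_of_le hx] at hy
    rw [hT y (le_of_lt hy.1), mul_zero]
  have hE : expTail κ f x = 0 :=
    setIntegral_eq_zero_of_forall_eq_zero fun y hy => by
      rw [hT y (hx.trans (le_of_lt hy)), mul_zero]
  rw [dirichletResolvent, hS, hE]
  ring

theorem hasDerivAt_halfLineSolution (hκ : κ ≠ 0) (C : ℝ) (hf : Continuous f)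
    (hfs : HasCompactSupport f) (x : ℝ) :
    HasDerivAt (halfLineSolution κ C f) (halfLineSolutionDeriv κ C f x) x := by
  have h := (hasDerivAt_dirichletResolvent hκ hf hfs x).add
    ((hasDerivAt_exp_neg_mul κ x).const_mul C)
  refine h.congr_deriv ?_
  rw [halfLineSolutionDeriv]
  ring

theorem hasDerivAt_halfLineSolutionDeriv (C : ℝ) (hf : Continuous f)
    (hfs : HasCompactSupport f) (x : ℝ) :
    HasDerivAt (halfLineSolutionDeriv κ C f) (κ ^ 2 * halfLineSolution κ C f x - f x) x := by
  have h := (hasDerivAt_dirichletResolventDeriv (κ := κ) hf hfs x).sub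
    (((hasDerivAt_exp_neg_mul κ x).const_mul C).const_mul κ)
  refine h.congr_deriv ?_
  rw [halfLineSolution]
  ring

@[simp]
theorem halfLineSolution_zero (κ C : ℝ) (f : ℝ → ℝ) : halfLineSolution κ C f 0 = C := by
  simp [halfLineSolution, dirichletResolvent, sinhPrimitive]

@[simp]
theorem halfLineSolutionDeriv_zero (κ C : ℝ) (f : ℝ → ℝ) :
    halfLineSolutionDeriv κ C f 0 = expTail κ f 0 - κ * C := by
  simp [halfLineSolutionDeriv, dirichletResolventDeriv, sinhPrimitive]

theorem memLp_halfLineSolution (hκ : 0 < κ) (C : ℝ) (hf : Continuous f)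
    (hfs : HasCompactSupport f) (a : ℝ) :
    MemLp (halfLineSolution κ C f) 2 (volume.restrict (Ioi a)) := by
  obtain ⟨T, hT⟩ := hfs.exists_forall_le_eq_zero
  have hcont : Continuous (halfLineSolution κ C f) := continuous_iff_continuousAt.2 fun x =>
    (hasDerivAt_halfLineSolution hκ.ne' C hf hfs x).continuousAt
  refine memLp_two_restrict_Ioi_of_eq_mul_exp hκ hcont
    (T := T) (B := κ⁻¹ * sinhPrimitive κ f T + C) (fun x hx => ?_) a
  rw [halfLineSolution, dirichletResolvent_eq_of_le hf hT hx]
  ring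

end HalfLine

theorem freeStarKernel_eq (N : ℕ) (κ α : ℝ) (j ℓ : Fin N) (x y : ℝ) :
    freeStarKernel N κ α j ℓ x y = (if j = ℓ then 1 else 0) * dirichletKernel κ x y
      + (α + N * κ)⁻¹ * exp (-(κ * x)) * exp (-(κ * y)) := by
  rw [freeStarKernel, dirichletKernel, mul_assoc _ (exp _), ← exp_add, ← neg_add, ← mul_add]

theorem sum_setIntegral_freeStarKernel_mul {N : ℕ} {κ : ℝ} (α : ℝ) (f : Fin N → ℝ → ℝ)
    (hfc : ∀ ℓ, Continuous (f ℓ)) (hfs : ∀ ℓ, HasCompactSupport (f ℓ)) (j : Fin N) {x : ℝ}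
    (hx : 0 ≤ x) :
    ∑ ℓ, ∫ y in Ioi 0, freeStarKernel N κ α j ℓ x y * f ℓ y
      = halfLineSolution κ ((α + N * κ)⁻¹ * ∑ ℓ, expTail κ (f ℓ) 0) (f j) x := by
  have hterm : ∀ ℓ, ∫ y in Ioi 0, freeStarKernel N κ α j ℓ x y * f ℓ y
      = (if j = ℓ then 1 else 0) * dirichletResolvent κ (f ℓ) x
        + (α + N * κ)⁻¹ * exp (-(κ * x)) * expTail κ (f ℓ) 0 := by
    intro ℓ
    have hG := (continuous_dirichletKernel κ x).integrable_mul_of_hasCompactSupport (hfc ℓ) (hfs ℓ)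
    have hE : Integrable fun y => exp (-(κ * y)) * f ℓ y :=
      Continuous.integrable_mul_of_hasCompactSupport (by fun_prop) (hfc ℓ) (hfs ℓ)
    have hsplit : ∀ y, freeStarKernel N κ α j ℓ x y * f ℓ y
        = (if j = ℓ then 1 else 0) * (dirichletKernel κ x y * f ℓ y)
          + (α + N * κ)⁻¹ * exp (-(κ * x)) * (exp (-(κ * y)) * f ℓ y) := by
      intro y
      rw [freeStarKernel_eq]
      ring
    simp_rw [hsplit]
    rw [integral_add (hG.const_mul _).integrableOn (hE.const_mul _).integrableOn,
      integral_const_mul, integral_const_mul, setIntegral_dirichletKernel_mul (hfc ℓ) (hfs ℓ) hx,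
      expTail]
  simp only [hterm, Finset.sum_add_distrib, ite_mul, one_mul, zero_mul, Finset.sum_ite_eq,
    Finset.mem_univ, if_true, ← Finset.mul_sum, halfLineSolution]
  ring

/-- The free-potential case of the resolvent-kernel lemma: for continuous,
compactly supported data `f`, the functions `w_j = Σ_ℓ ∫ G_{jℓ}(·,y) f_ℓ(y) dy`
are `C¹` on `[0,∞)`, satisfy `w'' = κ²w − f` on `(0,∞)`, obey the δ vertex
conditions with parameter `α`, and lie in `L²((0,∞))`. -/
theorem freeStarKernel_resolvent
    (N : ℕ) (hN : 2 ≤ N) (κ α : ℝ) (hκ : 0 < κ) (hα : α + N * κ ≠ 0)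
    (f : Fin N → ℝ → ℝ)
    (hfc : ∀ j, Continuous (f j)) (hfs : ∀ j, HasCompactSupport (f j))
    (w : Fin N → ℝ → ℝ)
    (hw : ∀ j x, w j x = ∑ ℓ, ∫ y in Ioi (0:ℝ), freeStarKernel N κ α j ℓ x y * f ℓ y) :
    ∃ w' : Fin N → ℝ → ℝ,
      (∀ j, ∀ x ∈ Ici (0:ℝ), HasDerivWithinAt (w j) (w' j x) (Ici 0) x) ∧
      (∀ j, ContinuousOn (w' j) (Ici 0)) ∧
      (∀ j, ∀ x ∈ Ioi (0:ℝ), HasDerivAt (w' j) (κ ^ 2 * w j x - f j x) x) ∧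
      (∀ j, w j 0 = w ⟨0, by omega⟩ 0) ∧
      ((∑ j, w' j 0) = α * w ⟨0, by omega⟩ 0) ∧
      (∀ j, MemLp (w j) 2 (volume.restrict (Ioi 0))) := by
  set C := (α + N * κ)⁻¹ * ∑ ℓ, expTail κ (f ℓ) 0 with hC
  have hwu : ∀ j, EqOn (w j) (halfLineSolution κ C (f j)) (Ici 0) := fun j x hx =>
    (hw j x).trans (sum_setIntegral_freeStarKernel_mul α f hfc hfs j hx)
  have hw0 : ∀ j, w j 0 = C := fun j => by rw [hwu j self_mem_Ici, halfLineSolution_zero]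
  refine ⟨fun j => halfLineSolutionDeriv κ C (f j), fun j x hx => ?_, fun j => ?_,
    fun j x hx => ?_, fun j => by rw [hw0, hw0], ?_, fun j => ?_⟩
  · exact (hasDerivAt_halfLineSolution hκ.ne' C (hfc j) (hfs j) x).hasDerivWithinAt.congr
      (hwu j) (hwu j hx)
  · exact (continuous_iff_continuousAt.2 fun x =>
      (hasDerivAt_halfLineSolutionDeriv C (hfc j) (hfs j) x).continuousAt).continuousOn
  · rw [hwu j (mem_Ici_of_Ioi hx)]
    exact hasDerivAt_halfLineSolutionDeriv C (hfc j) (hfs j) x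
  · simp only [hw0, halfLineSolutionDeriv_zero, Finset.sum_sub_distrib, Finset.sum_const,
      Finset.card_univ, Fintype.card_fin, nsmul_eq_mul, hC]
    field_simp
    ring
  · exact (memLp_halfLineSolution hκ C (hfc j) (hfs j) 0).ae_eq
      (ae_restrict_of_forall_mem measurableSet_Ioi fun x hx => (hwu j (mem_Ici_of_Ioi hx)).symm)
end

section
/- Let N ≥ 2, κ > 0, and let W_j, W_ℓ be real integrable functions on (0,∞). For ε > 0 and x,y > 0 set G^ε_{jℓ}(x,y) := δ_{jℓ}·κ^{-1}·sinh(κε·min(x,y))·exp(−κε·max(x,y)) + (Nκ)^{-1}·exp(−κε(x+y)), the free star-graph resolvent kernel at scaled arguments (εx, εy). Then lim_{ε→0+} ∫₀^∞∫₀^∞ |W_j(x)|·|G^ε_{jℓ}(x,y) − (Nκ)^{-1}|²·|W_ℓ(y)| dx dy = 0 for every pair (j,ℓ). (This is the Hilbert–Schmidt convergence C_{k,ε} → C_k of the rescaled Birman–Schwinger kernels proved in the paper's Theorem on approximating the δ coupling H_α by Schrödinger operators with squeezed potentials W_{ε,j}(x) = ε^{-1}W_j(x/ε), noting that the free kernel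 at the vertex equals G⁰_{jℓ}(0,0) = (Nκ)^{-1}.) -/
open MeasureTheory Set Real Filter

private lemma kernel_diff_abs_le (N : ℕ) (hN : 2 ≤ N) (κ : ℝ) (hκ : 0 < κ)
    (δ ε x y : ℝ) (hδ : δ = 0 ∨ δ = 1) (hε : 0 ≤ ε) (hx : 0 ≤ x) (hy : 0 ≤ y) :
    |δ * (κ⁻¹ * Real.sinh (κ * ε * min x y) * Real.exp (-(κ * ε * max x y)))
      + (N * κ)⁻¹ * Real.exp (-(κ * ε * (x + y))) - (N * κ)⁻¹|
      ≤ (2 * κ)⁻¹ + ((N : ℝ) * κ)⁻¹ := by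
  have hNpos : (0 : ℝ) < N := by
    exact_mod_cast lt_of_lt_of_le (by norm_num) hN
  have hNκ : (0 : ℝ) < (N : ℝ) * κ := by positivity
  set t := κ * ε * min x y with ht
  set s := κ * ε * max x y with hs
  have hts : t ≤ s := by
    apply mul_le_mul_of_nonneg_left (min_le_max) (by positivity)
  have ht0 : 0 ≤ t := by
    have : 0 ≤ min x y := le_min hx hy
    positivity
  -- the first summand lies in [0, (2κ)⁻¹]
  have hA0 : 0 ≤ κ⁻¹ * Real.sinh t * Real.exp (-s) := by
    have : 0 ≤ Real.sinh t := by
      rw [Real.sinh_eq]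
      have := Real.exp_le_exp.mpr (by linarith : -t ≤ t)
      linarith
    positivity
  have hA1 : κ⁻¹ * Real.sinh t * Real.exp (-s) ≤ (2 * κ)⁻¹ := by
    have h1 : Real.sinh t ≤ Real.exp t / 2 := by
      rw [Real.sinh_eq]
      have := Real.exp_pos (-t)
      linarith
    have h2 : Real.exp t * Real.exp (-s) = Real.exp (t - s) := by
      rw [← Real.exp_add]; ring_nf
    have h3 : Real.exp (t - s) ≤ 1 := Real.exp_le_one_iff.mpr (by linarith)
    have hexp : 0 < Real.exp (-s) := Real.exp_pos _
    calc κ⁻¹ * Real.sinh t * Real.exp (-s)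
        ≤ κ⁻¹ * (Real.exp t / 2) * Real.exp (-s) := by
          apply mul_le_mul_of_nonneg_right _ hexp.le
          exact mul_le_mul_of_nonneg_left h1 (by positivity)
      _ = (2 * κ)⁻¹ * Real.exp (t - s) := by rw [← h2]; field_simp
      _ ≤ (2 * κ)⁻¹ := by nlinarith [inv_pos.mpr (by positivity : (0:ℝ) < 2 * κ)]
  have hδA0 : 0 ≤ δ * (κ⁻¹ * Real.sinh t * Real.exp (-s)) := by
    rcases hδ with h | h <;> simp [h, hA0]
  have hδA1 : δ * (κ⁻¹ * Real.sinh t * Real.exp (-s)) ≤ (2 * κ)⁻¹ := by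
    rcases hδ with h | h
    · rw [h, zero_mul]; positivity
    · rw [h, one_mul]; exact hA1
  -- the second summand
  have hu0 : 0 ≤ κ * ε * (x + y) := by positivity
  have hB0 : (N * κ)⁻¹ * Real.exp (-(κ * ε * (x + y))) - (N * κ)⁻¹ ≤ 0 := by
    have h1 : Real.exp (-(κ * ε * (x + y))) ≤ 1 := Real.exp_le_one_iff.mpr (by linarith)
    nlinarith [inv_pos.mpr hNκ]
  have hB1 : -((N : ℝ) * κ)⁻¹ ≤ (N * κ)⁻¹ * Real.exp (-(κ * ε * (x + y))) - (N * κ)⁻¹ := by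
    have := Real.exp_pos (-(κ * ε * (x + y)))
    nlinarith [inv_pos.mpr hNκ]
  rw [abs_le]
  constructor <;> linarith

private lemma kernel_tendsto_pointwise (κ δ B a c m M u : ℝ) :
    Filter.Tendsto (fun ε : ℝ => a *
      (δ * (κ⁻¹ * Real.sinh (κ * ε * m) * Real.exp (-(κ * ε * M)))
        + B * Real.exp (-(κ * ε * u)) - B) ^ 2 * c) (nhds 0) (nhds 0) := by
  have hcont : Continuous (fun ε : ℝ => a *
      (δ * (κ⁻¹ * Real.sinh (κ * ε * m) * Real.exp (-(κ * ε * M)))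
        + B * Real.exp (-(κ * ε * u)) - B) ^ 2 * c) := by fun_prop
  have h := hcont.tendsto 0
  simpa using h

/-- Hilbert–Schmidt convergence `C_{k,ε} → C_k` of the rescaled Birman–Schwinger
kernels: the free star-graph resolvent kernel at the scaled arguments `(εx,εy)`
converges, in the weighted `L²` sense, to its value `(Nκ)⁻¹` at the vertex as
the squeezing parameter `ε` tends to `0+`. -/
theorem squeezed_kernel_hilbert_schmidt_convergence
    (N : ℕ) (hN : 2 ≤ N) (κ : ℝ) (hκ : 0 < κ) (j ℓ : Fin N)
    (W : Fin N → ℝ → ℝ) (hmeas : ∀ m, Measurable (W m))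
    (hint : ∀ m, IntegrableOn (W m) (Ioi 0)) :
    Tendsto (fun ε : ℝ => ∫ x in Ioi (0:ℝ), ∫ y in Ioi (0:ℝ),
        |W j x| *
          ((if j = ℓ then 1 else 0) *
              (κ⁻¹ * Real.sinh (κ * ε * min x y) * Real.exp (-(κ * ε * max x y)))
            + (N * κ)⁻¹ * Real.exp (-(κ * ε * (x + y)))
            - (N * κ)⁻¹) ^ 2 * |W ℓ y|)
      (nhdsWithin 0 (Ioi 0)) (nhds 0) := by
  have hNpos : (0 : ℝ) < N := by
    exact_mod_cast lt_of_lt_of_le (by norm_num) hN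
  set δ : ℝ := if j = ℓ then 1 else 0 with hδdef
  have hδ : δ = 0 ∨ δ = 1 := by
    rcases eq_or_ne j ℓ with h | h <;> simp [hδdef, h]
  set C : ℝ := (2 * κ)⁻¹ + ((N : ℝ) * κ)⁻¹ with hC
  set F : ℝ → ℝ × ℝ → ℝ := fun ε p =>
    |W j p.1| *
      (δ * (κ⁻¹ * Real.sinh (κ * ε * min p.1 p.2) * Real.exp (-(κ * ε * max p.1 p.2)))
        + (N * κ)⁻¹ * Real.exp (-(κ * ε * (p.1 + p.2))) - (N * κ)⁻¹) ^ 2 * |W ℓ p.2|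
    with hF
  set ν : Measure (ℝ × ℝ) :=
    ((volume : Measure ℝ).restrict (Ioi 0)).prod ((volume : Measure ℝ).restrict (Ioi 0)) with hν
  set bound : ℝ × ℝ → ℝ := fun p => |W j p.1| * C ^ 2 * |W ℓ p.2| with hbound
  have hCpos : 0 < C := by positivity
  -- measurability of F ε
  have hFmeas : ∀ ε : ℝ, Measurable (F ε) := by
    intro ε
    apply Measurable.mul
    apply Measurable.mul
    · exact ((hmeas j).comp measurable_fst).abs
    · apply Measurable.pow _ measurable_const
      apply Measurable.sub _ measurable_const
      apply Measurable.add
      · apply Measurable.const_mul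
        apply Measurable.mul
        · apply Measurable.const_mul
          exact Real.measurable_sinh.comp
            ((measurable_fst.min measurable_snd).const_mul _)
        · exact Real.measurable_exp.comp
            (((measurable_fst.max measurable_snd).const_mul _).neg)
      · apply Measurable.const_mul
        exact Real.measurable_exp.comp (((measurable_fst.add measurable_snd).const_mul _).neg)
    · exact ((hmeas ℓ).comp measurable_snd).abs
  -- a.e. points of ν are in Ioi 0 ×ˢ Ioi 0
  have hae : ∀ᵐ p ∂ν, p ∈ (Ioi (0:ℝ)) ×ˢ (Ioi (0:ℝ)) := by
    rw [hν, Measure.prod_restrict]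
    exact ae_restrict_mem (measurableSet_Ioi.prod measurableSet_Ioi)
  -- the pointwise bound for ε ≥ 0
  have hptbd : ∀ ε : ℝ, 0 ≤ ε → ∀ p : ℝ × ℝ, p ∈ (Ioi (0:ℝ)) ×ˢ (Ioi (0:ℝ)) →
      ‖F ε p‖ ≤ bound p := by
    intro ε hε p hp
    have hx : (0:ℝ) ≤ p.1 := le_of_lt hp.1
    have hy : (0:ℝ) ≤ p.2 := le_of_lt hp.2
    have h1 := kernel_diff_abs_le N hN κ hκ δ ε p.1 p.2 hδ hε hx hy
    have h2 : (δ * (κ⁻¹ * Real.sinh (κ * ε * min p.1 p.2) * Real.exp (-(κ * ε * max p.1 p.2)))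
        + (N * κ)⁻¹ * Real.exp (-(κ * ε * (p.1 + p.2))) - (N * κ)⁻¹) ^ 2 ≤ C ^ 2 := by
      rw [← sq_abs]
      exact pow_le_pow_left₀ (abs_nonneg _) h1 2
    have h3 : 0 ≤ (δ * (κ⁻¹ * Real.sinh (κ * ε * min p.1 p.2) *
        Real.exp (-(κ * ε * max p.1 p.2)))
        + (N * κ)⁻¹ * Real.exp (-(κ * ε * (p.1 + p.2))) - (N * κ)⁻¹) ^ 2 := sq_nonneg _
    have : ‖F ε p‖ = F ε p := by
      rw [Real.norm_eq_abs, abs_of_nonneg]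
      apply mul_nonneg (mul_nonneg (abs_nonneg _) h3) (abs_nonneg _)
    rw [this, hF, hbound]
    apply mul_le_mul_of_nonneg_right _ (abs_nonneg _)
    exact mul_le_mul_of_nonneg_left h2 (abs_nonneg _)
  -- integrability of the bound
  have hbint : Integrable bound ν := by
    have h1 : Integrable (fun x => |W j x| * C ^ 2) ((volume : Measure ℝ).restrict (Ioi 0)) :=
      ((hint j).abs.mul_const _)
    have h2 : Integrable (fun y => |W ℓ y|) ((volume : Measure ℝ).restrict (Ioi 0)) :=
      (hint ℓ).abs
    exact h1.mul_prod h2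
  -- integrability of F ε for ε ≥ 0
  have hFint : ∀ ε : ℝ, 0 ≤ ε → Integrable (F ε) ν := by
    intro ε hε
    apply Integrable.mono' hbint ((hFmeas ε).aestronglyMeasurable)
    filter_upwards [hae] with p hp
    exact hptbd ε hε p hp
  -- convergence of the product integrals
  have hmain : Tendsto (fun ε : ℝ => ∫ p, F ε p ∂ν) (nhdsWithin 0 (Ioi 0)) (nhds 0) := by
    have key := tendsto_integral_filter_of_dominated_convergence
      (μ := ν) (F := F) (f := fun _ => (0:ℝ)) (l := nhdsWithin 0 (Ioi 0)) bound
      (by filter_upwards with ε; exact (hFmeas ε).aestronglyMeasurable)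
      (by
        filter_upwards [self_mem_nhdsWithin] with ε (hε : ε ∈ Ioi (0:ℝ))
        filter_upwards [hae] with p hp
        exact hptbd ε (le_of_lt hε) p hp)
      hbint
      (by
        filter_upwards with p
        exact (kernel_tendsto_pointwise κ δ ((N:ℝ)*κ)⁻¹ |W j p.1| |W ℓ p.2|
          (min p.1 p.2) (max p.1 p.2) (p.1 + p.2)).mono_left
          (nhdsWithin_le_nhds : nhdsWithin (0:ℝ) (Ioi 0) ≤ nhds 0))
    simpa using key
  -- rewrite the iterated integrals as product integrals
  apply hmain.congr'
  filter_upwards [self_mem_nhdsWithin] with ε (hε : ε ∈ Ioi (0:ℝ))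
  have hFi : IntegrableOn (F ε) ((Ioi (0:ℝ)) ×ˢ (Ioi (0:ℝ))) (volume.prod volume) := by
    rw [IntegrableOn, ← Measure.prod_restrict]
    exact hFint ε (le_of_lt hε)
  have := setIntegral_prod (F ε) hFi
  rw [hν, Measure.prod_restrict]
  rw [← this]
end
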